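/- Define continuous functions on [0,1] by p(t) = 2 + 2t(1−t), s(t) = 2 − t, x(t) = y(t) = 1/2, q(t) = r(t) = 2, a(t) = √3·t, b(t) = √(t/5), c(t) = 5.5·√(5t/12), v(t) = 2 + 2t + 10t², u(t) = 2 + (25·5.5²/12)·t − 4t², and z(t) = (8 + (9 + 25·5.5²/12)t + (3/5 + 34.5)t² + 4t³)/(16 + 20t + 100t²). Then for every t ∈ [0,1] the three scalar equations of the pointwise vector bundle J-equation hold: (1) 6psx − b²(2s+v−1) − a²(2x+y−1) + 2abc − 2(ps+sx+px) = 0; (2) 6quy − c²(2q+r−1) − a²(x+2y−1) + 2abc − 2(qu+uy+qy) = 0; (3) 6rvz − c²(q+2r−1) − b²(s+2v−1) + 2abc − 2(rv+vz+rz) = 0. Moreover all of p,q,r,s,u,v,x,y,z are strictly positive on [0,1], the ellipticity quantity satisfies 3p(1)s(1) − a(1)² − p(1) − s(1) = 0, and 3p(0)s(0) − a(0)² − p(0) − s(0) = 8 > 0. -/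
import Mathlib


namespace JPath

noncomputable section

def p (t : ℝ) : ℝ := 2 + 2 * t * (1 - t)
def s (t : ℝ) : ℝ := 2 - t
def x (_t : ℝ) : ℝ := 1 / 2
def y (_t : ℝ) : ℝ := 1 / 2
def q (_t : ℝ) : ℝ := 2
def r (_t : ℝ) : ℝ := 2
def a (t : ℝ) : ℝ := Real.sqrt 3 * t
def b (t : ℝ) : ℝ := Real.sqrt (t / 5)
def c (t : ℝ) : ℝ := 5.5 * Real.sqrt (5 * t / 12)
def v (t : ℝ) : ℝ := 2 + 2 * t + 10 * t ^ 2
def u (t : ℝ) : ℝ := 2 + (25 * 5.5 ^ 2 / 12) * t - 4 * t ^ 2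
def z (t : ℝ) : ℝ :=
  (8 + (9 + 25 * 5.5 ^ 2 / 12) * t + (3 / 5 + 34.5) * t ^ 2 + 4 * t ^ 3)
    / (16 + 20 * t + 100 * t ^ 2)

lemma ha2 (t : ℝ) : a t ^ 2 = 3 * t ^ 2 := by
  simp only [a, mul_pow, Real.sq_sqrt (by norm_num : (3:ℝ) ≥ 0)]

lemma hb2 {t : ℝ} (ht : 0 ≤ t) : b t ^ 2 = t / 5 := by
  simp only [b]; rw [Real.sq_sqrt (by linarith)]

lemma hc2 {t : ℝ} (ht : 0 ≤ t) : c t ^ 2 = 5.5 ^ 2 * (5 * t / 12) := by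
  simp only [c, mul_pow]; rw [Real.sq_sqrt (by linarith)]

lemma habc {t : ℝ} (ht : 0 ≤ t) : a t * b t * c t = 2.75 * t ^ 2 := by
  simp only [a, b, c]
  rw [show (5:ℝ) * t / 12 = (5/12) * t by ring, show t / 5 = (1/5 : ℝ) * t by ring,
    Real.sqrt_mul (by norm_num), Real.sqrt_mul (by norm_num)]
  have h3 : (0:ℝ) ≤ Real.sqrt 3 := Real.sqrt_nonneg _
  have hst : Real.sqrt t * Real.sqrt t = t := Real.mul_self_sqrt ht
  have : Real.sqrt 3 * (Real.sqrt (1/5)) * (Real.sqrt (5/12)) = 1/2 := by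
    rw [← Real.sqrt_mul (by norm_num), ← Real.sqrt_mul (by norm_num)]
    rw [show (3:ℝ) * (1/5) * (5/12) = 1/4 by norm_num]
    rw [show (1:ℝ)/4 = (1/2)^2 by norm_num, Real.sqrt_sq (by norm_num)]
  calc Real.sqrt 3 * t * (Real.sqrt (1/5) * Real.sqrt t) * (5.5 * (Real.sqrt (5/12) * Real.sqrt t))
      = 5.5 * (Real.sqrt 3 * Real.sqrt (1/5) * Real.sqrt (5/12)) * (Real.sqrt t * Real.sqrt t) * t := by
        ring
    _ = 2.75 * t ^ 2 := by rw [hst, this]; ring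

theorem stmt12 :
    (∀ t ∈ Set.Icc (0 : ℝ) 1,
      6 * p t * s t * x t - b t ^ 2 * (2 * s t + v t - 1) - a t ^ 2 * (2 * x t + y t - 1)
        + 2 * a t * b t * c t - 2 * (p t * s t + s t * x t + p t * x t) = 0) ∧
    (∀ t ∈ Set.Icc (0 : ℝ) 1,
      6 * q t * u t * y t - c t ^ 2 * (2 * q t + r t - 1) - a t ^ 2 * (x t + 2 * y t - 1)
        + 2 * a t * b t * c t - 2 * (q t * u t + u t * y t + q t * y t) = 0) ∧
    (∀ t ∈ Set.Icc (0 : ℝ) 1,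
      6 * r t * v t * z t - c t ^ 2 * (q t + 2 * r t - 1) - b t ^ 2 * (s t + 2 * v t - 1)
        + 2 * a t * b t * c t - 2 * (r t * v t + v t * z t + r t * z t) = 0) ∧
    (∀ t ∈ Set.Icc (0 : ℝ) 1,
      0 < p t ∧ 0 < q t ∧ 0 < r t ∧ 0 < s t ∧ 0 < u t ∧ 0 < v t ∧
      0 < x t ∧ 0 < y t ∧ 0 < z t) ∧
    (3 * p 1 * s 1 - a 1 ^ 2 - p 1 - s 1 = 0) ∧
    (3 * p 0 * s 0 - a 0 ^ 2 - p 0 - s 0 = 8 ∧ (0 : ℝ) < 8) := by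

  have hden : ∀ t : ℝ, 0 ≤ t → (0:ℝ) < 16 + 20 * t + 100 * t ^ 2 := by
    intro t ht; positivity
  refine ⟨?_, ?_, ?_, ?_, ?_, ?_, by norm_num⟩
  · rintro t ⟨h0, h1⟩
    rw [ha2, hb2 h0]
    rw [show 2 * a t * b t * c t = 2 * (2.75 * t ^ 2) by rw [← habc h0]; ring]
    simp only [p, s, v, x, y]; ring
  · rintro t ⟨h0, h1⟩
    rw [ha2, hc2 h0]
    rw [show 2 * a t * b t * c t = 2 * (2.75 * t ^ 2) by rw [← habc h0]; ring]
    simp only [q, u, r, x, y]; ring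
  · rintro t ⟨h0, h1⟩
    rw [hb2 h0, hc2 h0]
    rw [show 2 * a t * b t * c t = 2 * (2.75 * t ^ 2) by rw [← habc h0]; ring]
    simp only [q, s, r, v, z]
    have hd := hden t h0
    field_simp
    ring
  · rintro t ⟨h0, h1⟩
    have hd := hden t h0
    refine ⟨?_, by norm_num [q], by norm_num [r], ?_, ?_, ?_, by norm_num [x], by norm_num [y], ?_⟩
    · simp only [p]; nlinarith
    · simp only [s]; linarith
    · simp only [u]; nlinarith
    · simp only [v]; positivity
    · simp only [z]
      apply div_pos _ hd
      positivity
  · rw [ha2]; simp only [p, s]; norm_num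
  · rw [ha2]; simp only [p, s]; norm_num


end

end JPath
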